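/- Let R̃ : ℝ → SO(3) satisfy the error dynamics dR̃/dt = [R̃, Ω_×] − k_P ω_× R̃ with ω = vex(P_a(R̃)), k_P > 0, and Ω(t) bounded. Then V(t) = ¼‖I − R̃(t)‖²_F satisfies dV/dt = −k_P ‖ω(t)‖² ≤ 0. -/

import Mathlib

open Matrix

attribute [local instance] Matrix.frobeniusNormedAddCommGroup Matrix.frobeniusNormedSpace

/-- The hat map sending `v ∈ ℝ³` to the skew-symmetric matrix `v_×`. -/
def hat (v : Fin 3 → ℝ) : Matrix (Fin 3) (Fin 3) ℝ :=
  !![0, -v 2, v 1;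
     v 2, 0, -v 0;
     -v 1, v 0, 0]

/-- Skew-symmetric (anti-symmetric) projection. -/
noncomputable def Pa (A : Matrix (Fin 3) (Fin 3) ℝ) : Matrix (Fin 3) (Fin 3) ℝ :=
  (1 / 2 : ℝ) • (A - Aᵀ)

/-- The inverse of the hat map. -/
def vex (A : Matrix (Fin 3) (Fin 3) ℝ) : Fin 3 → ℝ :=
  ![A 2 1, A 0 2, A 1 0]

/-!
For a rotation `R` one has `¼‖1 - R‖²_F = (3 - tr R) / 2`, so only `tr Ṙ` matters. The commutator
term of the dynamics is traceless, and `tr (ω_× R) = -2 ‖ω‖²` because only the skew part of `R`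
pairs with a skew matrix, and `ω` is exactly the vector of that skew part.
-/

theorem HasDerivAt.matrix_trace {n : Type*} [Fintype n] {R : ℝ → Matrix n n ℝ}
    {R' : Matrix n n ℝ} {t : ℝ} (h : HasDerivAt R R' t) :
    HasDerivAt (fun s => trace (R s)) (trace R') t :=
  (traceLinearMap n ℝ ℝ).toContinuousLinearMap.hasFDerivAt.comp_hasDerivAt t h

theorem Matrix.trace_one_sub_transpose_mul_one_sub {n : Type*} [Fintype n] [DecidableEq n]
    {R : Matrix n n ℝ} (hR : Rᵀ * R = 1) :
    trace ((1 - R)ᵀ * (1 - R)) = 2 * Fintype.card n - 2 * trace R := by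
  have hexpand : (1 - R)ᵀ * (1 - R) = 1 - R - Rᵀ + Rᵀ * R := by
    simp only [transpose_sub, transpose_one, sub_mul, mul_sub, mul_one, one_mul]
    abel
  rw [hexpand, hR, trace_add, trace_sub, trace_sub, trace_transpose, trace_one]
  ring

theorem trace_hat_mul (v : Fin 3 → ℝ) (A : Matrix (Fin 3) (Fin 3) ℝ) :
    trace (hat v * A) = -2 * (v ⬝ᵥ vex (Pa A)) := by
  simp [hat, vex, Pa, trace, vecMul, Fin.sum_univ_succ, dotProduct]
  ring

theorem lyapunov_decrease_error_dynamics_general (k_P : ℝ)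
    (Ω : ℝ → Fin 3 → ℝ)
    (R : ℝ → Matrix (Fin 3) (Fin 3) ℝ)
    (hSO3 : ∀ t, (R t)ᵀ * R t = 1 ∧ (R t).det = 1)
    (ω : ℝ → Fin 3 → ℝ) (hω : ∀ t, ω t = vex (Pa (R t)))
    (hdyn : ∀ t, HasDerivAt R
      (R t * hat (Ω t) - hat (Ω t) * R t - k_P • (hat (ω t) * R t)) t) :
    ∀ t, HasDerivAt
      (fun t => (1 / 4 : ℝ) * Matrix.trace ((1 - R t)ᵀ * (1 - R t)))
      (-k_P * (ω t ⬝ᵥ ω t)) t := by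
  intro t
  have hV : (fun s => (1 / 4 : ℝ) * trace ((1 - R s)ᵀ * (1 - R s)))
      = fun s => 3 / 2 - 1 / 2 * trace (R s) := by
    funext s
    rw [trace_one_sub_transpose_mul_one_sub (hSO3 s).1, Fintype.card_fin]
    ring
  have hdtrace : trace (R t * hat (Ω t) - hat (Ω t) * R t - k_P • (hat (ω t) * R t))
      = 2 * k_P * (ω t ⬝ᵥ ω t) := by
    rw [trace_sub, trace_sub, trace_mul_comm (R t), sub_self, trace_smul, trace_hat_mul,
      ← hω, smul_eq_mul]
    ring
  rw [hV]
  refine (((hdyn t).matrix_trace.const_mul (1 / 2 : ℝ)).const_sub (3 / 2 : ℝ)).congr_deriv ?_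
  rw [hdtrace]
  ring

theorem lyapunov_decrease_error_dynamics (k_P : ℝ) (hk : 0 < k_P)
    (Ω : ℝ → Fin 3 → ℝ) (hΩbdd : ∃ M : ℝ, ∀ t, ‖Ω t‖ ≤ M)
    (R : ℝ → Matrix (Fin 3) (Fin 3) ℝ)
    (hSO3 : ∀ t, (R t)ᵀ * R t = 1 ∧ (R t).det = 1)
    (ω : ℝ → Fin 3 → ℝ) (hω : ∀ t, ω t = vex (Pa (R t)))
    (hdyn : ∀ t, HasDerivAt R
      (R t * hat (Ω t) - hat (Ω t) * R t - k_P • (hat (ω t) * R t)) t) :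
    ∀ t, HasDerivAt
      (fun t => (1 / 4 : ℝ) * Matrix.trace ((1 - R t)ᵀ * (1 - R t)))
      (-k_P * (ω t ⬝ᵥ ω t)) t :=
  lyapunov_decrease_error_dynamics_general k_P Ω R hSO3 ω hω hdyn
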